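/- Key approximation lemma: Let (X, Ω, μ, E) be a measure space with Ω a σ-algebra. Let φ be a nonnegative elementary (finite-valued simple measurable) function and (φ_n) an increasing sequence of nonnegative elementary functions with φ ≤ sup_n φ_n pointwise in [0,∞]. Then the order integral of φ satisfies ∫ᵒ φ dμ ≤ ⋁_{n≥1} ∫ᵒ φ_n dμ in E̅. -/

import Mathlib

/-! For `0 < c < 1` the measurable sets `{c • φ ≤ ψ n}` increase to the whole space, so
continuity from below of `μ` turns the bounds `∫ᵒ_{c • φ ≤ ψ n} c • φ dμ ≤ ∫ᵒ ψ n dμ ≤ b` into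
`c • ∫ᵒ φ dμ ≤ b`. Letting `c → 1` uses that `E` is Archimedean, which follows from σ-monotone
completeness. -/

open MeasureTheory

/-- The action of `ℝ⁺` (as `ℝ≥0`) on `E̅⁺ ⊆ WithTop E`: `r • ∞ = ∞` for
`r > 0` and `0 • ∞ = 0`. -/
noncomputable def eSMul {E : Type*} [AddCommGroup E] [Module ℝ E]
    (r : NNReal) (x : WithTop E) : WithTop E :=
  if r = 0 then 0 else x.map fun e => (r : ℝ) • e

/-- The order integral of a nonnegative elementary (finite-valued simple
measurable) function with respect to a set map `μ : Ω → E̅⁺`. -/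
noncomputable def elemOInt {X : Type*} [MeasurableSpace X]
    {E : Type*} [AddCommGroup E] [Module ℝ E]
    (μ : Set X → WithTop E) (φ : SimpleFunc X NNReal) : WithTop E :=
  ∑ r ∈ φ.range, eSMul r (μ (⇑φ ⁻¹' {r}))

/-- `μ : Ω → E̅⁺` is an order-σ-additive `E̅⁺`-valued measure on the σ-algebra
of measurable sets. -/
def IsOMeasure {X : Type*} [MeasurableSpace X]
    {E : Type*} [AddCommGroup E] [PartialOrder E] (μ : Set X → WithTop E) : Prop :=
  μ ∅ = 0 ∧ (∀ s : Set X, MeasurableSet s → 0 ≤ μ s) ∧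
  ∀ Δ : ℕ → Set X, (∀ n, MeasurableSet (Δ n)) →
    (∀ m n, m ≠ n → Disjoint (Δ m) (Δ n)) →
    IsLUB (Set.range fun N => ∑ n ∈ Finset.range N, μ (Δ n)) (μ (⋃ n, Δ n))

open Set

section eSMul
variable {E : Type*} [AddCommGroup E] [Module ℝ E]

@[simp] lemma eSMul_zero_left (x : WithTop E) : eSMul 0 x = 0 := if_pos rfl

lemma eSMul_of_ne_zero {r : NNReal} (hr : r ≠ 0) (x : WithTop E) :
    eSMul r x = x.map fun e => (r : ℝ) • e := if_neg hr

lemma eSMul_coe {r : NNReal} (hr : r ≠ 0) (e : E) :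
    eSMul r (e : WithTop E) = ((r : ℝ) • e : E) := eSMul_of_ne_zero hr _

lemma eSMul_top {r : NNReal} (hr : r ≠ 0) : eSMul r (⊤ : WithTop E) = ⊤ := eSMul_of_ne_zero hr _

@[simp] lemma eSMul_zero_right (r : NNReal) : eSMul r (0 : WithTop E) = 0 := by
  rcases eq_or_ne r 0 with rfl | hr
  · exact eSMul_zero_left 0
  · rw [← WithTop.coe_zero, eSMul_coe hr, smul_zero]

lemma eSMul_add (r : NNReal) (x y : WithTop E) :
    eSMul r (x + y) = eSMul r x + eSMul r y := by
  rcases eq_or_ne r 0 with rfl | hr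
  · simp
  induction x using WithTop.recTopCoe with
  | top => simp [eSMul_top hr]
  | coe e =>
    induction y using WithTop.recTopCoe with
    | top => simp [eSMul_top hr, eSMul_coe hr]
    | coe f => simp only [← WithTop.coe_add, eSMul_coe hr, smul_add]

noncomputable def eSMulAddMonoidHom (r : NNReal) : WithTop E →+ WithTop E where
  toFun := eSMul r
  map_zero' := eSMul_zero_right r
  map_add' := eSMul_add r

lemma eSMul_sum {ι : Type*} (r : NNReal) (s : Finset ι) (f : ι → WithTop E) :
    eSMul r (∑ i ∈ s, f i) = ∑ i ∈ s, eSMul r (f i) :=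
  map_sum (eSMulAddMonoidHom r) f s

lemma eSMul_mul (r s : NNReal) (x : WithTop E) :
    eSMul (r * s) x = eSMul r (eSMul s x) := by
  rcases eq_or_ne r 0 with rfl | hr
  · simp
  rcases eq_or_ne s 0 with rfl | hs
  · simp
  induction x using WithTop.recTopCoe with
  | top => rw [eSMul_top hs, eSMul_top hr, eSMul_top (mul_ne_zero hr hs)]
  | coe e =>
    rw [eSMul_coe hs, eSMul_coe hr, eSMul_coe (mul_ne_zero hr hs), NNReal.coe_mul, mul_smul]

variable [PartialOrder E] [PosSMulMono ℝ E]

lemma eSMul_eq_withTopCongr {r : NNReal} (hr : r ≠ 0) :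
    eSMul (E := E) r =
      (OrderIso.smulRight (α := ℝ) (NNReal.coe_pos.2 (pos_iff_ne_zero.2 hr))).withTopCongr :=
  funext (eSMul_of_ne_zero hr)

lemma eSMul_mono_right (r : NNReal) : Monotone (eSMul (E := E) r) := by
  rcases eq_or_ne r 0 with rfl | hr
  · exact fun x y _ => by simp
  · rw [eSMul_eq_withTopCongr hr]
    exact OrderIso.monotone _

lemma eSMul_nonneg (r : NNReal) {x : WithTop E} (hx : 0 ≤ x) : 0 ≤ eSMul r x := by
  simpa using eSMul_mono_right r hx

lemma eSMul_mono_left [IsOrderedAddMonoid E] {r s : NNReal} (h : r ≤ s) {x : WithTop E}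
    (hx : 0 ≤ x) : eSMul r x ≤ eSMul s x := by
  rcases eq_or_ne r 0 with rfl | hr
  · simpa using eSMul_nonneg s hx
  have hs : s ≠ 0 := (lt_of_lt_of_le (pos_iff_ne_zero.2 hr) h).ne'
  induction x using WithTop.recTopCoe with
  | top => rw [eSMul_top hs]; exact le_top
  | coe e =>
    rw [eSMul_coe hr, eSMul_coe hs, WithTop.coe_le_coe]
    exact smul_le_smul_of_nonneg_right h (WithTop.coe_nonneg.1 hx)

lemma isLUB_range_eSMul {ι : Type*} [Nonempty ι] (r : NNReal) {f : ι → WithTop E}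
    {a : WithTop E} (ha : IsLUB (range f) a) :
    IsLUB (range fun i => eSMul r (f i)) (eSMul r a) := by
  rcases eq_or_ne r 0 with rfl | hr
  · simp
  · rw [eSMul_eq_withTopCongr hr, ← Function.comp_def, range_comp]
    exact (OrderIso.isLUB_image' _).2 ha

end eSMul

section lub
variable {E : Type*} [AddCommGroup E] [PartialOrder E] [IsOrderedAddMonoid E]

lemma WithTop.isLUB_range_add_left {ι : Type*} [Nonempty ι] (x : WithTop E)
    {f : ι → WithTop E} {a : WithTop E} (ha : IsLUB (range f) a) :
    IsLUB (range fun i => x + f i) (x + a) := by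
  induction x using WithTop.recTopCoe with
  | top => simp
  | coe e =>
    have hmap : ∀ y : WithTop E, WithTop.map (e + ·) y = ↑e + y := by
      intro y; cases y <;> rfl
    simp only [← hmap]
    rw [← Function.comp_def, range_comp]
    exact ((OrderIso.addLeft e).withTopCongr.isLUB_image' (s := range f)).2 ha

lemma WithTop.isLUB_range_add {f g : ℕ → WithTop E} (hf : Monotone f) (hg : Monotone g)
    {a b : WithTop E} (ha : IsLUB (range f) a) (hb : IsLUB (range g) b) :
    IsLUB (range fun n => f n + g n) (a + b) := by
  refine ⟨forall_mem_range.2 fun n =>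
    add_le_add (ha.1 (mem_range_self n)) (hb.1 (mem_range_self n)), fun m hm => ?_⟩
  have hfb : ∀ n, f n + b ≤ m := fun n =>
    (isLUB_range_add_left (f n) hb).2 <| forall_mem_range.2 fun k =>
      (add_le_add (hf (le_max_left n k)) (hg (le_max_right n k))).trans (hm (mem_range_self _))
  rw [add_comm]
  exact (isLUB_range_add_left b ha).2 <| forall_mem_range.2 fun n =>
    (add_comm b (f n)).trans_le (hfb n)

lemma WithTop.isLUB_range_sum {ι : Type*} (s : Finset ι) {f : ι → ℕ → WithTop E}
    (hf : ∀ i ∈ s, Monotone (f i)) {a : ι → WithTop E}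
    (ha : ∀ i ∈ s, IsLUB (range (f i)) (a i)) :
    IsLUB (range fun n => ∑ i ∈ s, f i n) (∑ i ∈ s, a i) := by
  classical
  induction s using Finset.induction with
  | empty => simp
  | insert j s hj ih =>
    simp only [Finset.sum_insert hj]
    refine isLUB_range_add (hf j (s.mem_insert_self j))
      (fun m n hmn => Finset.sum_le_sum fun i hi => hf i (s.mem_insert_of_mem hi) hmn)
      (ha j (s.mem_insert_self j))
      (ih (fun i hi => hf i (s.mem_insert_of_mem hi)) fun i hi => ha i (s.mem_insert_of_mem hi))

end lub

namespace IsOMeasure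
variable {X : Type*} [MeasurableSpace X] {E : Type*} [AddCommGroup E] [PartialOrder E]
  {μ : Set X → WithTop E}

lemma nonneg (hμ : IsOMeasure μ) {s : Set X} (hs : MeasurableSet s) : 0 ≤ μ s := hμ.2.1 s hs

variable [IsOrderedAddMonoid E]

lemma monotone_sum_range (hμ : IsOMeasure μ) {Δ : ℕ → Set X}
    (hΔ : ∀ n, MeasurableSet (Δ n)) : Monotone fun N => ∑ n ∈ Finset.range N, μ (Δ n) :=
  fun _ _ h =>
    Finset.sum_le_sum_of_subset_of_nonneg (Finset.range_mono h) fun n _ _ => hμ.nonneg (hΔ n)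

lemma iUnion_eq_sum_range (hμ : IsOMeasure μ) {Δ : ℕ → Set X} (hΔ : ∀ n, MeasurableSet (Δ n))
    (hdisj : ∀ m n, m ≠ n → Disjoint (Δ m) (Δ n)) {N : ℕ} (hN : ∀ n, N ≤ n → Δ n = ∅) :
    μ (⋃ n, Δ n) = ∑ n ∈ Finset.range N, μ (Δ n) := by
  refine (hμ.2.2 Δ hΔ hdisj).unique
    (IsGreatest.isLUB ⟨mem_range_self N, forall_mem_range.2 fun n => ?_⟩)
  calc ∑ i ∈ Finset.range n, μ (Δ i)
      ≤ ∑ i ∈ Finset.range (max n N), μ (Δ i) := hμ.monotone_sum_range hΔ (le_max_left n N)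
    _ = ∑ i ∈ Finset.range N, μ (Δ i) := by
      refine (Finset.sum_subset (Finset.range_mono (le_max_right n N)) fun i _ hi => ?_).symm
      rw [hN i (by simpa using hi), hμ.1]

lemma union (hμ : IsOMeasure μ) {s t : Set X} (hs : MeasurableSet s) (ht : MeasurableSet t)
    (hst : Disjoint s t) : μ (s ∪ t) = μ s + μ t := by
  let Δ : ℕ → Set X := fun n => if n = 0 then s else if n = 1 then t else ∅
  have hΔ : ∀ n, MeasurableSet (Δ n) := by
    intro n; dsimp only [Δ]; split_ifs <;> simp [hs, ht]
  have hdisj : ∀ m n, m ≠ n → Disjoint (Δ m) (Δ n) := by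
    rintro (_ | _ | m) (_ | _ | n) hmn <;> simp_all [Δ, hst.symm]
  have hunion : ⋃ n, Δ n = s ∪ t := by
    ext x
    simp only [mem_iUnion, mem_union]
    constructor
    · rintro ⟨n, hn⟩
      dsimp only [Δ] at hn
      split_ifs at hn <;> simp_all
    · rintro (hx | hx)
      exacts [⟨0, hx⟩, ⟨1, hx⟩]
  rw [← hunion, hμ.iUnion_eq_sum_range hΔ hdisj (N := 2) fun n hn => by
    simp only [Δ]; rw [if_neg (by omega), if_neg (by omega)]]
  simp [Finset.sum_range_succ, Δ]

lemma add_diff (hμ : IsOMeasure μ) {s t : Set X} (hs : MeasurableSet s) (ht : MeasurableSet t)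
    (hst : s ⊆ t) : μ s + μ (t \ s) = μ t := by
  rw [← hμ.union hs (ht.diff hs) disjoint_sdiff_right, union_sdiff_cancel hst]

lemma mono (hμ : IsOMeasure μ) {s t : Set X} (hs : MeasurableSet s) (ht : MeasurableSet t)
    (hst : s ⊆ t) : μ s ≤ μ t :=
  (le_add_of_nonneg_right (hμ.nonneg (ht.diff hs))).trans_eq (hμ.add_diff hs ht hst)

lemma biUnion_finset (hμ : IsOMeasure μ) {ι : Type*} (s : Finset ι) {B : ι → Set X}
    (hB : ∀ i, MeasurableSet (B i)) (hdisj : (s : Set ι).PairwiseDisjoint B) :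
    μ (⋃ i ∈ s, B i) = ∑ i ∈ s, μ (B i) := by
  classical
  induction s using Finset.induction with
  | empty => simpa using hμ.1
  | insert j s hj ih =>
    rw [Finset.coe_insert, pairwiseDisjoint_insert] at hdisj
    rw [Finset.set_biUnion_insert, Finset.sum_insert hj, ← ih hdisj.1]
    refine hμ.union (hB j) (s.measurableSet_biUnion fun i _ => hB i) ?_
    exact disjoint_iUnion₂_right.2 fun i hi => hdisj.2 i hi (ne_of_mem_of_not_mem hi hj).symm

lemma isLUB_iUnion_of_monotone (hμ : IsOMeasure μ) {C : ℕ → Set X} (hC : Monotone C)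
    (hmeas : ∀ n, MeasurableSet (C n)) :
    IsLUB (range fun n => μ (C n)) (μ (⋃ n, C n)) := by
  have hD := MeasurableSet.disjointed hmeas
  have hsum : ∀ N, ∑ n ∈ Finset.range (N + 1), μ (disjointed C n) = μ (C N) := by
    intro N
    induction N with
    | zero => simp [disjointed_zero]
    | succ N ih =>
      rw [Finset.sum_range_succ, ih, hC.disjointed_add_one,
        hμ.add_diff (hmeas N) (hmeas (N + 1)) (hC N.le_succ)]
  have hlub := hμ.2.2 (disjointed C) hD fun m n h => disjoint_disjointed C h
  rw [iUnion_disjointed] at hlub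
  have hcomp : (fun n => μ (C n)) =
      (fun N => ∑ n ∈ Finset.range N, μ (disjointed C n)) ∘ (· + 1) :=
    funext fun N => (hsum N).symm
  rw [hcomp, IsLUB, (hμ.monotone_sum_range hD).upperBounds_range_comp_tendsto_atTop
    (Filter.tendsto_add_atTop_nat 1)]
  exact hlub

lemma eq_sum_inter_fiber (hμ : IsOMeasure μ) (χ : SimpleFunc X NNReal) {B : Set X}
    (hB : MeasurableSet B) : μ B = ∑ r ∈ χ.range, μ (B ∩ χ ⁻¹' {r}) := by
  rw [← hμ.biUnion_finset χ.range (fun r => hB.inter (χ.measurableSet_fiber r))]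
  · rw [← inter_iUnion₂, ← preimage_iUnion₂]
    congr
    ext x
    simp
  · exact fun r _ s _ hrs => ((disjoint_singleton.2 hrs).preimage χ).mono inter_subset_right
      inter_subset_right

end IsOMeasure

section setElemOInt
variable {X : Type*} [MeasurableSpace X] {E : Type*} [AddCommGroup E] [Module ℝ E]

noncomputable def setElemOInt (μ : Set X → WithTop E) (χ : SimpleFunc X NNReal) (A : Set X) :
    WithTop E :=
  ∑ r ∈ χ.range, eSMul r (μ (χ ⁻¹' {r} ∩ A))

lemma setElemOInt_univ (μ : Set X → WithTop E) (χ : SimpleFunc X NNReal) :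
    setElemOInt μ χ univ = elemOInt μ χ := by
  simp [setElemOInt, elemOInt]

lemma elemOInt_smul (μ : Set X → WithTop E) {c : NNReal} (hc : c ≠ 0)
    (φ : SimpleFunc X NNReal) : elemOInt μ (c • φ) = eSMul c (elemOInt μ φ) := by
  classical
  have hrange : (c • φ).range = φ.range.image (c * ·) := by
    rw [SimpleFunc.smul_eq_map, SimpleFunc.range_map]; rfl
  have hfiber : ∀ r, (c • φ) ⁻¹' {c * r} = φ ⁻¹' {r} := fun r => by
    ext x
    simp [mul_right_inj' hc]
  rw [elemOInt, hrange, Finset.sum_image fun x _ y _ => mul_left_cancel₀ hc, elemOInt, eSMul_sum]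
  exact Finset.sum_congr rfl fun r _ => by rw [hfiber, eSMul_mul]

variable [PartialOrder E] [IsOrderedAddMonoid E] {μ : Set X → WithTop E}

lemma setElemOInt_eq_sum_sum (hμ : IsOMeasure μ) (χ ζ : SimpleFunc X NNReal) {A : Set X}
    (hA : MeasurableSet A) :
    setElemOInt μ χ A =
      ∑ r ∈ χ.range, ∑ s ∈ ζ.range, eSMul r (μ (χ ⁻¹' {r} ∩ ζ ⁻¹' {s} ∩ A)) := by
  refine Finset.sum_congr rfl fun r _ => ?_
  rw [hμ.eq_sum_inter_fiber ζ ((χ.measurableSet_fiber r).inter hA), eSMul_sum]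
  simp only [inter_right_comm _ A]

variable [PosSMulMono ℝ E]

lemma elemOInt_nonneg (hμ : IsOMeasure μ) (χ : SimpleFunc X NNReal) : 0 ≤ elemOInt μ χ :=
  Finset.sum_nonneg fun r _ => eSMul_nonneg r (hμ.nonneg (χ.measurableSet_fiber r))

lemma setElemOInt_mono_set (hμ : IsOMeasure μ) (χ : SimpleFunc X NNReal) {A B : Set X}
    (hA : MeasurableSet A) (hB : MeasurableSet B) (hAB : A ⊆ B) :
    setElemOInt μ χ A ≤ setElemOInt μ χ B :=
  Finset.sum_le_sum fun r _ => eSMul_mono_right r <|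
    hμ.mono ((χ.measurableSet_fiber r).inter hA) ((χ.measurableSet_fiber r).inter hB)
      (inter_subset_inter_right _ hAB)

lemma setElemOInt_mono (hμ : IsOMeasure μ) {χ ζ : SimpleFunc X NNReal} {A : Set X}
    (hA : MeasurableSet A) (h : ∀ x ∈ A, χ x ≤ ζ x) :
    setElemOInt μ χ A ≤ setElemOInt μ ζ A := by
  rw [setElemOInt_eq_sum_sum hμ ζ χ hA, Finset.sum_comm, setElemOInt_eq_sum_sum hμ χ ζ hA]
  refine Finset.sum_le_sum fun r _ => Finset.sum_le_sum fun s _ => ?_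
  rw [inter_comm (ζ ⁻¹' {s})]
  rcases (χ ⁻¹' {r} ∩ ζ ⁻¹' {s} ∩ A).eq_empty_or_nonempty with hempty | ⟨x, ⟨hxr, hxs⟩, hxA⟩
  · simp [hempty, hμ.1]
  · refine eSMul_mono_left ?_ (hμ.nonneg (((χ.measurableSet_fiber r).inter
      (ζ.measurableSet_fiber s)).inter hA))
    obtain rfl : χ x = r := hxr
    obtain rfl : ζ x = s := hxs
    exact h x hxA

lemma isLUB_setElemOInt (hμ : IsOMeasure μ) (χ : SimpleFunc X NNReal) {A : ℕ → Set X}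
    (hA : Monotone A) (hmeas : ∀ n, MeasurableSet (A n)) :
    IsLUB (range fun n => setElemOInt μ χ (A n)) (setElemOInt μ χ (⋃ n, A n)) := by
  refine WithTop.isLUB_range_sum χ.range (fun r _ m n hmn => eSMul_mono_right r ?_)
    fun r _ => ?_
  · exact hμ.mono ((χ.measurableSet_fiber r).inter (hmeas m))
      ((χ.measurableSet_fiber r).inter (hmeas n)) (inter_subset_inter_right _ (hA hmn))
  · rw [inter_iUnion]
    exact isLUB_range_eSMul r <| hμ.isLUB_iUnion_of_monotone
      (fun m n hmn => inter_subset_inter_right _ (hA hmn))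
      fun n => (χ.measurableSet_fiber r).inter (hmeas n)

end setElemOInt

section archimedean
variable {E : Type*} [AddCommGroup E] [PartialOrder E] [IsOrderedAddMonoid E] [Module ℝ E]
  [PosSMulMono ℝ E]

/-- The supremum `s` of `-(n + 2)⁻¹ • e` satisfies `s ≤ 2 • s`, because every term of the
sequence is twice a later one; hence `s = 0`. -/
lemma le_zero_of_forall_le_smul
    (hσ : ∀ a : ℕ → E, Monotone a → BddAbove (range a) → ∃ s, IsLUB (range a) s)
    {e u : E} (he : 0 ≤ e) (h : ∀ ε : ℝ, 0 < ε → ε < 1 → u ≤ ε • e) : u ≤ 0 := by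
  let a : ℕ → E := fun n => -(((n : ℝ) + 2)⁻¹ • e)
  have ha_nonpos : ∀ n, a n ≤ 0 := fun n => neg_nonpos.2 (smul_nonneg (by positivity) he)
  have ha_mono : Monotone a := monotone_nat_of_le_succ fun n => by
    refine neg_le_neg (smul_le_smul_of_nonneg_right ?_ he)
    rw [inv_le_inv₀ (by positivity) (by positivity)]
    push_cast
    linarith
  have ha_double : ∀ n, a n = (2 : ℝ) • a (2 * n + 2) := fun n => by
    simp only [a, smul_neg, smul_smul]
    congr 2
    push_cast
    field_simp
    ring
  obtain ⟨s, hs⟩ := hσ a ha_mono ⟨0, forall_mem_range.2 ha_nonpos⟩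
  have hs_le_two_smul : s ≤ (2 : ℝ) • s := hs.2 <| forall_mem_range.2 fun n =>
    (ha_double n).trans_le (smul_le_smul_of_nonneg_left (hs.1 (mem_range_self _)) zero_le_two)
  have hs_nonneg : 0 ≤ s := by rwa [two_smul, le_add_iff_nonneg_right] at hs_le_two_smul
  have hs_le : s ≤ -u := hs.2 <| forall_mem_range.2 fun n =>
    neg_le_neg (h _ (by positivity) (inv_lt_one_of_one_lt₀ (by linarith)))
  exact neg_nonneg.1 (hs_nonneg.trans hs_le)

lemma le_of_forall_lt_one_smul_le
    (hσ : ∀ a : ℕ → E, Monotone a → BddAbove (range a) → ∃ s, IsLUB (range a) s)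
    {e f : E} (he : 0 ≤ e) (h : ∀ c : ℝ, 0 < c → c < 1 → c • e ≤ f) : e ≤ f := by
  refine sub_nonpos.1 (le_zero_of_forall_le_smul hσ he fun ε hε0 hε1 => ?_)
  have hc := h (1 - ε) (by linarith) (by linarith)
  rw [sub_smul, one_smul] at hc
  exact sub_le_comm.1 hc

lemma WithTop.le_of_forall_lt_one_eSMul_le
    (hσ : ∀ a : ℕ → E, Monotone a → BddAbove (range a) → ∃ s, IsLUB (range a) s)
    {x y : WithTop E} (hx : 0 ≤ x) (h : ∀ c : NNReal, 0 < c → c < 1 → eSMul c x ≤ y) :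
    x ≤ y := by
  induction x using WithTop.recTopCoe with
  | top =>
    rw [← eSMul_top (r := 2⁻¹) (by norm_num)]
    exact h 2⁻¹ (by norm_num) (by norm_num)
  | coe e =>
    induction y using WithTop.recTopCoe with
    | top => exact le_top
    | coe f =>
      refine WithTop.coe_le_coe.2 <| le_of_forall_lt_one_smul_le hσ (WithTop.coe_nonneg.1 hx)
        fun c hc0 hc1 => ?_
      have hc0' : (0 : NNReal) < ⟨c, hc0.le⟩ := hc0
      have hc := h _ hc0' hc1
      rwa [eSMul_coe hc0'.ne', WithTop.coe_le_coe] at hc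

end archimedean

lemma NNReal.exists_mul_le_of_le_iSup {a c : NNReal} {f : ℕ → NNReal}
    (h : (a : ENNReal) ≤ ⨆ n, (f n : ENNReal)) (hc : c < 1) : ∃ n, c * a ≤ f n := by
  rcases eq_or_ne a 0 with rfl | ha
  · exact ⟨0, by simp⟩
  have hlt : ((c * a : NNReal) : ENNReal) < ⨆ n, (f n : ENNReal) :=
    lt_of_lt_of_le (by exact_mod_cast mul_lt_of_lt_one_left (pos_iff_ne_zero.2 ha) hc) h
  obtain ⟨n, hn⟩ := lt_iSup_iff.1 hlt
  exact ⟨n, by exact_mod_cast hn.le⟩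

section main
variable {X : Type*} [MeasurableSpace X] {E : Type*} [AddCommGroup E] [PartialOrder E]
  [IsOrderedAddMonoid E] [Module ℝ E] [PosSMulMono ℝ E] {μ : Set X → WithTop E}

lemma eSMul_elemOInt_le_of_isLUB (hμ : IsOMeasure μ) {φ : SimpleFunc X NNReal}
    {ψ : ℕ → SimpleFunc X NNReal} (hmono : ∀ x, Monotone fun n => ψ n x)
    (hle : ∀ x, (φ x : ENNReal) ≤ ⨆ n, (ψ n x : ENNReal)) {b : WithTop E}
    (hb : IsLUB (range fun n => elemOInt μ (ψ n)) b) {c : NNReal} (hc0 : c ≠ 0)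
    (hc1 : c < 1) : eSMul c (elemOInt μ φ) ≤ b := by
  let A : ℕ → Set X := fun n => {x | (c • φ) x ≤ ψ n x}
  have hA : ∀ n, MeasurableSet (A n) := fun n =>
    measurableSet_le (c • φ).measurable (ψ n).measurable
  have hA_mono : Monotone A := fun m n hmn x hx => hx.trans (hmono x hmn)
  have hA_univ : ⋃ n, A n = univ :=
    eq_univ_of_forall fun x => mem_iUnion.2 (NNReal.exists_mul_le_of_le_iSup (hle x) hc1)
  have hlub := isLUB_setElemOInt hμ (c • φ) hA_mono hA
  rw [hA_univ, setElemOInt_univ, elemOInt_smul μ hc0] at hlub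
  refine hlub.2 (forall_mem_range.2 fun n => ?_)
  calc setElemOInt μ (c • φ) (A n)
      ≤ setElemOInt μ (ψ n) (A n) := setElemOInt_mono hμ (hA n) fun x hx => hx
    _ ≤ setElemOInt μ (ψ n) univ := setElemOInt_mono_set hμ _ (hA n) .univ (subset_univ _)
    _ = elemOInt μ (ψ n) := setElemOInt_univ μ (ψ n)
    _ ≤ b := hb.1 (mem_range_self n)

end main

theorem elemOInt_le_of_le_iSup_general
    {X : Type*} [MeasurableSpace X]
    {E : Type*} [AddCommGroup E] [PartialOrder E] [IsOrderedAddMonoid E] [Module ℝ E] [PosSMulStrictMono ℝ E]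
    (hσ : ∀ a : ℕ → E, Monotone a → BddAbove (Set.range a) → ∃ s, IsLUB (Set.range a) s)
    (μ : Set X → WithTop E) (hμ : IsOMeasure μ)
    (φ : SimpleFunc X NNReal) (ψ : ℕ → SimpleFunc X NNReal)
    (hmono : ∀ x : X, Monotone fun n => ψ n x)
    (hle : ∀ x : X, (φ x : ENNReal) ≤ ⨆ n, (ψ n x : ENNReal))
    (b : WithTop E) (hb : IsLUB (Set.range fun n => elemOInt μ (ψ n)) b) :
    elemOInt μ φ ≤ b :=
  WithTop.le_of_forall_lt_one_eSMul_le hσ (elemOInt_nonneg hμ φ) fun _ hc0 hc1 =>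
    eSMul_elemOInt_le_of_isLUB hμ hmono hle hb hc0.ne' hc1

/-- Key approximation lemma: if `φ` is a nonnegative elementary function,
`(φ_n)` an increasing sequence of nonnegative elementary functions with
`φ ≤ sup_n φ_n` pointwise in `[0,∞]`, and `b` is the supremum of the order
integrals of the `φ_n` in `E̅`, then `∫ᵒ φ dμ ≤ b`. -/
theorem elemOInt_le_of_le_iSup
    {X : Type*} [MeasurableSpace X]
    {E : Type*} [AddCommGroup E] [PartialOrder E] [IsOrderedAddMonoid E] [Module ℝ E] [PosSMulStrictMono ℝ E] [PosSMulReflectLT ℝ E]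
    (hσ : ∀ a : ℕ → E, Monotone a → BddAbove (Set.range a) → ∃ s, IsLUB (Set.range a) s)
    (μ : Set X → WithTop E) (hμ : IsOMeasure μ)
    (φ : SimpleFunc X NNReal) (ψ : ℕ → SimpleFunc X NNReal)
    (hmono : ∀ x : X, Monotone fun n => ψ n x)
    (hle : ∀ x : X, (φ x : ENNReal) ≤ ⨆ n, (ψ n x : ENNReal))
    (b : WithTop E) (hb : IsLUB (Set.range fun n => elemOInt μ (ψ n)) b) :
    elemOInt μ φ ≤ b :=
  elemOInt_le_of_le_iSup_general hσ μ hμ φ ψ hmono hle b hb
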